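/- arXiv:1607.03848 — 3 statements merged into one kernel-verified Lean document; each statement's English description precedes it below -/
import Mathlib

section
/- Every identifying code in the bi-infinite path ℤ has lower density at least 1/2; equivalently, for every identifying code C ⊆ ℤ and every n ≥ 1, |C ∩ {1, …, 2n}| ≥ n − 1. -/
open Filter

/-- The bi-infinite path: vertex set is the integers, with edges between
consecutive integers. -/
def pathZ : SimpleGraph ℤ where
  Adj a b := (a - b).natAbs = 1
  symm := ⟨by intro a b h; omega⟩
  loopless := ⟨by intro a h; omega⟩

/-- Closed neighborhood N[v]. -/
def closedNbhd {V : Type*} (G : SimpleGraph V) (v : V) : Set V :=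
  {u | u = v ∨ G.Adj u v}

/-- C is an identifying code in G. -/
def IsIdentifyingCode {V : Type*} (G : SimpleGraph V) (C : Set V) : Prop :=
  (∀ v, (closedNbhd G v ∩ C).Nonempty) ∧
  ∀ u v : V, u ≠ v → closedNbhd G u ∩ C ≠ closedNbhd G v ∩ C

/-!
Among two consecutive vertices `x + 1`, `x + 2` of the path, only `x` and `x + 3` lie in exactly
one of the two closed neighbourhoods, so an identifying code contains `x` or `x + 3` for every `x`.
Hence each window of six consecutive integers holds three code elements (one from each of the
pairs `{a, a + 3}`, `{a + 1, a + 4}`, `{a + 2, a + 5}`) and each window of four holds one; tiling a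
window of length `2n` by blocks of six and one shorter block gives at least `n - 1` elements.
-/

open Filter Topology Set

theorem IsIdentifyingCode.pathZ_mem_or_add_three_mem {C : Set ℤ}
    (hC : IsIdentifyingCode pathZ C) (x : ℤ) : x ∈ C ∨ x + 3 ∈ C := by
  by_contra! h
  refine hC.2 (x + 1) (x + 2) (by omega) (Set.ext fun y => ?_)
  simp only [closedNbhd, pathZ, mem_inter_iff, mem_ofPred_eq]
  constructor
  · rintro ⟨hN, hy⟩
    have : y ≠ x := fun hyx => h.1 (hyx ▸ hy)
    exact ⟨by omega, hy⟩
  · rintro ⟨hN, hy⟩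
    have : y ≠ x + 3 := fun hyx => h.2 (hyx ▸ hy)
    exact ⟨by omega, hy⟩

namespace Int

theorem ncard_Ico (a b : ℤ) : (Ico a b).ncard = (b - a).toNat := by
  rw [← Finset.coe_Ico, ncard_coe_finset, Int.card_Ico]

theorem ncard_Icc (a b : ℤ) : (Icc a b).ncard = (b + 1 - a).toNat := by
  rw [← Finset.coe_Icc, ncard_coe_finset, Int.card_Icc]

theorem ncard_inter_Ico_eq_add (C : Set ℤ) {a b c : ℤ} (hab : a ≤ b) (hbc : b ≤ c) :
    (C ∩ Ico a c).ncard = (C ∩ Ico a b).ncard + (C ∩ Ico b c).ncard := by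
  rw [← Ico_union_Ico_eq_Ico hab hbc, inter_union_distrib_left,
    ncard_union_eq (Ico_disjoint_Ico_same.mono inter_subset_right inter_subset_right)
      ((finite_Ico _ _).inter_of_right C) ((finite_Ico _ _).inter_of_right C)]

section MemOrAddThreeMem

variable {C : Set ℤ} (hC : ∀ x, x ∈ C ∨ x + 3 ∈ C)
include hC

theorem le_ncard_inter_Ico_add_three {k : ℕ} (hk : k ≤ 3) (a : ℤ) :
    k ≤ (C ∩ Ico a (a + k + 3)).ncard := by
  classical
  let pick : ℤ → ℤ := fun x => if x ∈ C then x else x + 3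
  have hpick : ∀ x, pick x ∈ C ∧ (pick x = x ∨ pick x = x + 3) := fun x => by
    by_cases hx : x ∈ C <;> simp [pick, hx, (hC x).resolve_left]
  calc k = (Ico a (a + k)).ncard := by rw [ncard_Ico]; omega
    _ ≤ (C ∩ Ico a (a + k + 3)).ncard := by
      refine ncard_le_ncard_of_injOn pick (fun x hx => ?_) (fun x hx y hy hxy => ?_)
        ((finite_Ico _ _).inter_of_right C)
      · obtain ⟨hxC, hx'⟩ := hpick x
        exact ⟨hxC, by simp only [mem_Ico] at hx ⊢; omega⟩
      · -- `pick` moves points by `0` or `3` within a window of length `k ≤ 3`.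
        simp only [mem_Ico] at hx hy
        have := (hpick x).2
        have := (hpick y).2
        omega

theorem le_ncard_inter_Ico_add_one :
    ∀ (n : ℕ) (a : ℤ), n ≤ (C ∩ Ico a (a + 2 * n)).ncard + 1
  | 0, _ => by omega
  | 1, _ => by omega
  | 2, a => by
    have := le_ncard_inter_Ico_add_three hC (k := 1) (by omega) a
    rw [show a + ((1 : ℕ) : ℤ) + 3 = a + 2 * ((2 : ℕ) : ℤ) by push_cast; ring] at this
    omega
  | n + 3, a => by
    have hblock := le_ncard_inter_Ico_add_three hC le_rfl a
    have hrest := le_ncard_inter_Ico_add_one n (a + 6)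
    rw [show a + ((3 : ℕ) : ℤ) + 3 = a + 6 by push_cast; ring] at hblock
    rw [show a + 2 * ((n + 3 : ℕ) : ℤ) = a + 6 + 2 * n by push_cast; ring,
      ncard_inter_Ico_eq_add C (b := a + 6) (by omega) (by omega)]
    omega

end MemOrAddThreeMem

end Int

theorem tendsto_sub_one_div_two_mul_add_one :
    Tendsto (fun r : ℕ => ((r : ℝ) - 1) / (2 * r + 1)) atTop (𝓝 (1 / 2)) := by
  have hinv : Tendsto (fun r : ℕ => (2 * (r : ℝ) + 1)⁻¹) atTop (𝓝 0) :=
    (tendsto_atTop_add_const_right _ 1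
      (tendsto_natCast_atTop_atTop.const_mul_atTop two_pos)).inv_tendsto_atTop
  have hlim := (hinv.const_mul (3 / 2)).const_sub (1 / 2 : ℝ)
  rw [mul_zero, sub_zero] at hlim
  refine hlim.congr fun r => ?_
  field_simp
  ring

theorem half_le_liminf_div_two_mul_add_one {c : ℕ → ℝ} (hlow : ∀ r : ℕ, (r : ℝ) - 1 ≤ c r)
    (hup : ∀ r : ℕ, c r ≤ 2 * r + 1) :
    1 / 2 ≤ liminf (fun r : ℕ => c r / (2 * r + 1)) atTop := by
  have hpos : ∀ r : ℕ, (0 : ℝ) < 2 * r + 1 := fun r => by positivity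
  rw [← tendsto_sub_one_div_two_mul_add_one.liminf_eq]
  refine liminf_le_liminf (.of_forall fun r => ?_)
    tendsto_sub_one_div_two_mul_add_one.isBoundedUnder_ge
    (isCoboundedUnder_ge_of_le atTop (x := 1) fun r => ?_)
  · exact div_le_div_of_nonneg_right (hlow r) (hpos r).le
  · exact (div_le_one (hpos r)).2 (hup r)

/-- Every identifying code in the bi-infinite path has lower density at least
1/2; equivalently, it has at least n - 1 elements among {1, ..., 2n}. -/
theorem identifying_code_path_lower_density (C : Set ℤ)
    (hC : IsIdentifyingCode pathZ C) :
    (1 / 2 : ℝ) ≤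
      liminf (fun r : ℕ =>
        ((C ∩ Set.Icc (-(r : ℤ)) (r : ℤ)).ncard : ℝ) / (2 * r + 1)) atTop ∧
    ∀ n : ℕ, 1 ≤ n →
      ((n : ℤ) - 1) ≤ ((C ∩ Set.Icc (1 : ℤ) (2 * n)).ncard : ℤ) := by
  have hcount := Int.le_ncard_inter_Ico_add_one hC.pathZ_mem_or_add_three_mem
  refine ⟨half_le_liminf_div_two_mul_add_one (fun r => ?_) (fun r => ?_), fun n _ => ?_⟩
  · have hsub : C ∩ Ico (-(r : ℤ)) (-r + 2 * r) ⊆ C ∩ Icc (-(r : ℤ)) r :=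
      inter_subset_inter_right C (Ico_subset_Icc_self.trans (Icc_subset_Icc le_rfl (by omega)))
    have := (hcount r (-r)).trans
      (Nat.add_le_add_right (ncard_le_ncard hsub ((finite_Icc _ _).inter_of_right C)) 1)
    have : (r : ℝ) ≤ (C ∩ Icc (-(r : ℤ)) r).ncard + 1 := by exact_mod_cast this
    linarith
  · have := ncard_le_ncard (inter_subset_right (s := C)) (finite_Icc (-(r : ℤ)) r)
    rw [Int.ncard_Icc] at this
    have : (C ∩ Icc (-(r : ℤ)) r).ncard ≤ 2 * r + 1 := by omega
    exact_mod_cast this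
  · have := hcount n 1
    rw [show (1 : ℤ) + 2 * n = 2 * n + 1 by ring, Ico_add_one_right_eq_Icc] at this
    omega
end

section
/- (Karp's theorem) Let G be a finite strongly connected edge-weighted directed graph with n vertices and fixed source s, and let F_k(v) denote the minimum weight of a walk of length exactly k from s to v (∞ if none exists). Then the minimum cycle mean λ* of G equals min over v ∈ V of max over 0 ≤ k ≤ n−1 of (F_n(v) − F_k(v))/(n − k). -/
/-!
Subtracting a constant `r` from every weight lowers every cycle mean and every ratio
`(F_n(v) - F_k(v)) / (n - k)` by `r`; with `r = λ*` all cycles have nonnegative weight and some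
cycle `C` has weight zero. A lightest walk of length `n` to `v` contains a cycle, and deleting it
leaves a walk of length `k < n` that is no heavier, so some ratio at `v` is `≥ 0`. Conversely,
with nonnegative cycles the distance `d(v)` from `s` is attained by a walk with fewer than `n`
edges, and `F_k(v) ≥ d(v)` for every `k`. Following a lightest walk from `s` to the start of `C`
and then winding along `C` until `n` edges are used ends at a vertex `v` with `F_n(v) ≤ d(v)`,
because finishing the winding returns to the start of `C` at no net cost. So every ratio at this
`v` is `≤ 0`.
-/

/-- A list of edges is a walk from u to v in a directed multigraph given by
source and target maps. -/
def IsWalkFrom {V E : Type*} (src tgt : E → V) : V → V → List E → Prop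
  | u, v, [] => u = v
  | u, v, e :: l => src e = u ∧ IsWalkFrom src tgt (tgt e) v l

/-- F k v: the minimum weight of a walk of length exactly k from s to v
(infinity if no such walk exists), as an extended real number. -/
noncomputable def minWalkWeight {V E : Type*} (src tgt : E → V) (f : E → ℝ)
    (s : V) (k : ℕ) (v : V) : EReal :=
  sInf {w : EReal | ∃ l : List E,
    IsWalkFrom src tgt s v l ∧ l.length = k ∧ w = ((l.map f).sum : EReal)}

/-- One vertex can reach another along directed edges. -/
def Reaches {V E : Type*} (src tgt : E → V) : V → V → Prop :=
  Relation.ReflTransGen (fun a b => ∃ e : E, src e = a ∧ tgt e = b)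

/-- Every vertex can reach every other vertex. -/
def StronglyConnected {V E : Type*} (src tgt : E → V) : Prop :=
  ∀ u v : V, Reaches src tgt u v

/-- A nonempty list of edges forms a closed walk: consecutive edges match up,
cyclically. -/
def IsClosedWalk {V E : Type*} (src tgt : E → V) (l : List E) : Prop :=
  l ≠ [] ∧ ∀ i : Fin l.length,
    tgt (l.get i) =
      src (l.get ⟨(i + 1) % l.length,
        Nat.mod_lt _ (Nat.lt_of_le_of_lt (Nat.zero_le _) i.2)⟩)

/-- The minimum cycle mean: the infimum over all closed walks of the total
edge weight divided by the number of edges. -/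
noncomputable def minCycleMean {V E : Type*} (src tgt : E → V) (f : E → ℝ) :
    EReal :=
  sInf {w : EReal | ∃ l : List E, IsClosedWalk src tgt l ∧
    w = (((l.map f).sum / l.length : ℝ) : EReal)}

section

variable {V E : Type*} {src tgt : E → V}

section Walks

def walkEnd (tgt : E → V) (u : V) (l : List E) : V := l.foldl (fun _ e => tgt e) u

theorem IsWalkFrom.append {u v w : V} {l₁ l₂ : List E}
    (h₁ : IsWalkFrom src tgt u v l₁) (h₂ : IsWalkFrom src tgt v w l₂) :
    IsWalkFrom src tgt u w (l₁ ++ l₂) := by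
  induction l₁ generalizing u with
  | nil => cases h₁; exact h₂
  | cons e l ih => exact ⟨h₁.1, ih h₁.2⟩

theorem IsWalkFrom.of_append {u w : V} {l₁ l₂ : List E}
    (h : IsWalkFrom src tgt u w (l₁ ++ l₂)) :
    IsWalkFrom src tgt u (walkEnd tgt u l₁) l₁ ∧
      IsWalkFrom src tgt (walkEnd tgt u l₁) w l₂ := by
  induction l₁ generalizing u with
  | nil => exact ⟨rfl, h⟩
  | cons e l ih => exact ⟨⟨h.1, (ih h.2).1⟩, (ih h.2).2⟩

theorem IsWalkFrom.flatten_replicate {u : V} {c : List E} (h : IsWalkFrom src tgt u u c)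
    (m : ℕ) : IsWalkFrom src tgt u u (List.replicate m c).flatten := by
  induction m with
  | zero => rfl
  | succ m ih => exact h.append ih

theorem Reaches.exists_isWalkFrom {u v : V} (h : Reaches src tgt u v) :
    ∃ l, IsWalkFrom src tgt u v l := by
  induction h with
  | refl => exact ⟨[], rfl⟩
  | tail _ hbc ih =>
    obtain ⟨l, hl⟩ := ih
    obtain ⟨e, he₁, he₂⟩ := hbc
    exact ⟨l ++ [e], hl.append ⟨he₁, he₂⟩⟩

theorem isWalkFrom_iff_isChain {u v : V} {l : List E} :
    IsWalkFrom src tgt u v l ↔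
      ((l = [] → u = v) ∧ (∀ h : l ≠ [], src (l.head h) = u) ∧
       (∀ h : l ≠ [], tgt (l.getLast h) = v) ∧ l.IsChain (fun a b => tgt a = src b)) := by
  induction l generalizing u with
  | nil => simp [IsWalkFrom]
  | cons e l ih =>
    simp only [IsWalkFrom, ih, List.isChain_cons]
    constructor
    · rintro ⟨hsrc, h0, h1, h2, h3⟩
      refine ⟨by simp, fun _ => hsrc, fun _ => ?_, ?_, h3⟩
      · rcases eq_or_ne l [] with rfl | hl
        · exact h0 rfl
        · rw [List.getLast_cons hl]; exact h2 hl
      · intro y hy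
        have hl : l ≠ [] := by rintro rfl; simp at hy
        rw [List.head?_eq_some_head hl, Option.mem_some_iff] at hy
        exact hy ▸ (h1 hl).symm
    · rintro ⟨-, hhead, hlast, hch, h3⟩
      refine ⟨hhead (by simp), fun hl => ?_, fun hl => ?_, fun hl => ?_, h3⟩
      · subst hl
        exact hlast (by simp)
      · exact (hch (l.head hl) (by rw [List.head?_eq_some_head hl]; rfl)).symm
      · rw [← List.getLast_cons (a := e) hl]
        exact hlast (by simp)

theorem IsClosedWalk.isWalkFrom {l : List E} (h : IsClosedWalk src tgt l) :
    IsWalkFrom src tgt (src (l.head h.1)) (src (l.head h.1)) l := by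
  obtain ⟨hne, hcyc⟩ := h
  have hlen : 0 < l.length := List.length_pos_iff.2 hne
  rw [isWalkFrom_iff_isChain]
  refine ⟨fun h => absurd h hne, fun _ => rfl, fun _ => ?_, ?_⟩
  · have := hcyc ⟨l.length - 1, by omega⟩
    simp only [List.get_eq_getElem, Nat.sub_add_cancel hlen, Nat.mod_self] at this
    rw [List.getLast_eq_getElem, this, List.head_eq_getElem]
  · rw [List.isChain_iff_getElem]
    intro i hi
    have := hcyc ⟨i, by omega⟩
    simp only [List.get_eq_getElem, Nat.mod_eq_of_lt hi] at this
    exact this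

theorem IsWalkFrom.isClosedWalk {u : V} {l : List E} (h : IsWalkFrom src tgt u u l)
    (hne : l ≠ []) : IsClosedWalk src tgt l := by
  have hlen : 0 < l.length := List.length_pos_iff.2 hne
  obtain ⟨-, hhead, hlast, hch⟩ := isWalkFrom_iff_isChain.1 h
  refine ⟨hne, fun ⟨i, hi⟩ => ?_⟩
  simp only [List.get_eq_getElem]
  rcases Nat.lt_or_ge (i + 1) l.length with hi' | hi'
  · simp only [Nat.mod_eq_of_lt hi']
    exact List.isChain_iff_getElem.1 hch i hi'
  · obtain rfl : i = l.length - 1 := by omega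
    have := hlast hne
    rw [List.getLast_eq_getElem] at this
    simp only [Nat.sub_add_cancel hlen, Nat.mod_self, this, ← hhead hne, List.head_eq_getElem]

end Walks

section CycleRemoval

variable [Fintype V]

theorem IsWalkFrom.exists_cycle_split {u v : V} {l : List E} (h : IsWalkFrom src tgt u v l)
    (hlen : Fintype.card V ≤ l.length) :
    ∃ (l₁ l₂ l₃ : List E) (x : V), l = l₁ ++ (l₂ ++ l₃) ∧ l₂ ≠ [] ∧
      l₂.length ≤ Fintype.card V ∧ IsWalkFrom src tgt u x l₁ ∧
      IsWalkFrom src tgt x x l₂ ∧ IsWalkFrom src tgt x v l₃ := by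
  -- pigeonhole on the endpoints of the first `card V + 1` prefixes
  obtain ⟨i, j, hne, hij⟩ := Fintype.exists_ne_map_eq_of_card_lt
    (fun i : Fin (Fintype.card V + 1) => walkEnd tgt u (l.take i)) (by simp)
  wlog hlt : (i : ℕ) < j generalizing i j
  · exact this j i hne.symm hij.symm (by omega)
  have hj := j.2
  set a := l.take i
  set b := (l.take j).drop i
  have hab : a ++ b = l.take j := by
    rw [← List.take_append_drop i (l.take j), List.take_take, Nat.min_eq_left hlt.le]
  have hl : l = (a ++ b) ++ l.drop j := by rw [hab, List.take_append_drop]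
  obtain ⟨hw, h₃⟩ := (hl ▸ h).of_append
  rw [hab, ← hij] at h₃
  rw [hab, ← hij, ← hab] at hw
  obtain ⟨h₁, h₂⟩ := hw.of_append
  refine ⟨a, b, l.drop j, _, hl.trans (List.append_assoc ..), ?_, ?_, h₁, h₂, h₃⟩
  · rw [← List.length_pos_iff, List.length_drop, List.length_take]
    omega
  · rw [List.length_drop, List.length_take]
    omega

theorem IsWalkFrom.exists_short_sum_le {g : E → ℝ}
    (hcyc : ∀ c, IsClosedWalk src tgt c → 0 ≤ (c.map g).sum) {u v : V} {l : List E}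
    (hl : IsWalkFrom src tgt u v l) :
    ∃ l', IsWalkFrom src tgt u v l' ∧ l'.length < Fintype.card V ∧
      (l'.map g).sum ≤ (l.map g).sum := by
  induction hn : l.length using Nat.strong_induction_on generalizing l with
  | _ n ih =>
  rcases lt_or_ge l.length (Fintype.card V) with hlt | hge
  · exact ⟨l, hl, hlt, le_rfl⟩
  obtain ⟨l₁, l₂, l₃, x, rfl, hne, -, h₁, h₂, h₃⟩ := hl.exists_cycle_split hge
  have := List.length_pos_iff.2 hne
  obtain ⟨l', hl', hlen', hle⟩ :=
    ih _ (by simp only [List.length_append] at hn ⊢; omega) (h₁.append h₃) rfl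
  refine ⟨l', hl', hlen', hle.trans ?_⟩
  have hcycle := hcyc l₂ (h₂.isClosedWalk hne)
  simp only [List.map_append, List.sum_append]
  linarith

theorem Reaches.exists_short_walk {u v : V} (h : Reaches src tgt u v) :
    ∃ l, IsWalkFrom src tgt u v l ∧ l.length < Fintype.card V := by
  obtain ⟨l, hl⟩ := h.exists_isWalkFrom
  obtain ⟨l', hl', hlen, -⟩ := hl.exists_short_sum_le (g := fun _ => 0) fun _ _ => by simp
  exact ⟨l', hl', hlen⟩

theorem IsClosedWalk.sum_nonneg_of_short {g : E → ℝ}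
    (hshort : ∀ c, IsClosedWalk src tgt c → c.length ≤ Fintype.card V → 0 ≤ (c.map g).sum)
    {c : List E} (hc : IsClosedWalk src tgt c) : 0 ≤ (c.map g).sum := by
  induction hn : c.length using Nat.strong_induction_on generalizing c with
  | _ n ih =>
  rcases le_or_gt c.length (Fintype.card V) with hle | hgt
  · exact hshort c hc hle
  obtain ⟨l₁, l₂, l₃, x, hsplit, hne, hle, h₁, h₂, h₃⟩ :=
    hc.isWalkFrom.exists_cycle_split hgt.le
  have hlen : c.length = (l₁ ++ l₃).length + l₂.length := by
    rw [hsplit]; simp only [List.length_append]; omega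
  have := List.length_pos_iff.2 hne
  have hne₁₃ : l₁ ++ l₃ ≠ [] := List.length_pos_iff.1 (by omega)
  have hrest := ih _ (by omega) ((h₁.append h₃).isClosedWalk hne₁₃) rfl
  have hcycle := hshort l₂ (h₂.isClosedWalk hne) hle
  rw [hsplit]
  simp only [List.map_append, List.sum_append] at hrest ⊢
  linarith

theorem exists_short_isClosedWalk (h : ∃ c : List E, IsClosedWalk src tgt c) :
    ∃ c, IsClosedWalk src tgt c ∧ c.length ≤ Fintype.card V := by
  obtain ⟨c, hc⟩ := h
  rcases le_or_gt c.length (Fintype.card V) with hle | hgt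
  · exact ⟨c, hc, hle⟩
  obtain ⟨_, l₂, _, _, -, hne, hle, -, h₂, -⟩ := hc.isWalkFrom.exists_cycle_split hgt.le
  exact ⟨l₂, h₂.isClosedWalk hne, hle⟩

end CycleRemoval

theorem sum_map_sub_const (f : E → ℝ) (r : ℝ) (l : List E) :
    (l.map (f · - r)).sum = (l.map f).sum - l.length * r := by
  induction l with
  | nil => simp
  | cons e l ih =>
    simp only [List.map_cons, List.sum_cons, List.length_cons, ih]
    push_cast
    ring

section MinWalkWeight

variable {f : E → ℝ} {s v : V} {k : ℕ}

theorem minWalkWeight_le {l : List E} (hl : IsWalkFrom src tgt s v l) (hk : l.length = k) :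
    minWalkWeight src tgt f s k v ≤ ((l.map f).sum : EReal) :=
  sInf_le ⟨l, hl, hk, rfl⟩

theorem minWalkWeight_ne_top {l : List E} (hl : IsWalkFrom src tgt s v l) (hk : l.length = k) :
    minWalkWeight src tgt f s k v ≠ ⊤ :=
  ne_top_of_le_ne_top (EReal.coe_ne_top _) (minWalkWeight_le hl hk)

theorem minWalkWeight_eq_top (h : ∀ l, IsWalkFrom src tgt s v l → l.length ≠ k) :
    minWalkWeight src tgt f s k v = ⊤ :=
  sInf_eq_top.2 fun _ ⟨l, hl, hk, _⟩ => absurd hk (h l hl)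

theorem exists_minWalkWeight_eq [Finite E] (h : minWalkWeight src tgt f s k v ≠ ⊤) :
    ∃ l, IsWalkFrom src tgt s v l ∧ l.length = k ∧
      minWalkWeight src tgt f s k v = ((l.map f).sum : EReal) := by
  set S := {w : EReal | ∃ l : List E, IsWalkFrom src tgt s v l ∧ l.length = k ∧
      w = ((l.map f).sum : EReal)}
  have hfin : S.Finite :=
    ((List.finite_length_eq E k).image _).subset fun _ ⟨l, _, hk, hw⟩ => ⟨l, hk, hw.symm⟩
  have hne : S.Nonempty := Set.nonempty_iff_ne_empty.2 fun hempty => h (by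
    change sInf S = ⊤; rw [hempty, sInf_empty])
  exact hne.csInf_mem hfin

end MinWalkWeight

section MinCycleMean

theorem minCycleMean_eq_top (f : E → ℝ) (h : ¬ ∃ c : List E, IsClosedWalk src tgt c) :
    minCycleMean src tgt f = ⊤ :=
  sInf_eq_top.2 fun _ ⟨c, hc, _⟩ => absurd ⟨c, hc⟩ h

theorem exists_minCycleMean_eq [Fintype V] [Finite E] (f : E → ℝ)
    (h : ∃ c : List E, IsClosedWalk src tgt c) :
    ∃ (r : ℝ) (C : List E), IsClosedWalk src tgt C ∧ (C.map f).sum = C.length * r ∧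
      (∀ c, IsClosedWalk src tgt c → c.length * r ≤ (c.map f).sum) ∧
      minCycleMean src tgt f = r := by
  have hfin : {c : List E | IsClosedWalk src tgt c ∧ c.length ≤ Fintype.card V}.Finite :=
    (List.finite_length_le E _).subset fun _ hc => hc.2
  obtain ⟨C, ⟨hC, -⟩, hCmin⟩ := Set.exists_min_image _
    (fun c : List E => (c.map f).sum / c.length) hfin (exists_short_isClosedWalk h)
  set r := (C.map f).sum / C.length
  have hpos {c : List E} (hc : IsClosedWalk src tgt c) : (0 : ℝ) < c.length := by
    exact_mod_cast List.length_pos_iff.2 hc.1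
  have hbound (c : List E) (hc : IsClosedWalk src tgt c) : c.length * r ≤ (c.map f).sum := by
    have := hc.sum_nonneg_of_short (g := (f · - r)) fun c hc hle => by
      rw [sum_map_sub_const, sub_nonneg, mul_comm, ← le_div_iff₀ (hpos hc)]
      exact hCmin c ⟨hc, hle⟩
    rwa [sum_map_sub_const, sub_nonneg] at this
  refine ⟨r, C, hC, by rw [mul_div_cancel₀ _ (hpos hC).ne'], hbound, ?_⟩
  refine le_antisymm (sInf_le ⟨C, hC, rfl⟩) (le_sInf ?_)
  rintro _ ⟨c, hc, rfl⟩
  rw [EReal.coe_le_coe_iff, le_div_iff₀ (hpos hc), mul_comm]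
  exact hbound c hc

end MinCycleMean

section MinimalWalks

variable [Fintype V] [Finite E] {g : E → ℝ}

theorem Reaches.exists_minimal_walk
    (hcyc : ∀ c, IsClosedWalk src tgt c → 0 ≤ (c.map g).sum) {u v : V}
    (h : Reaches src tgt u v) :
    ∃ P, IsWalkFrom src tgt u v P ∧ P.length < Fintype.card V ∧
      ∀ l, IsWalkFrom src tgt u v l → (P.map g).sum ≤ (l.map g).sum := by
  have hfin : {l : List E | IsWalkFrom src tgt u v l ∧ l.length < Fintype.card V}.Finite :=
    (List.finite_length_lt E _).subset fun _ hl => hl.2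
  obtain ⟨P, ⟨hP, hPlen⟩, hPmin⟩ :=
    Set.exists_min_image _ (fun l : List E => (l.map g).sum) hfin h.exists_short_walk
  refine ⟨P, hP, hPlen, fun l hl => ?_⟩
  obtain ⟨l', hl', hlen', hle⟩ := hl.exists_short_sum_le hcyc
  exact (hPmin l' ⟨hl', hlen'⟩).trans hle

theorem exists_minimal_walk_length_eq_card
    (hcyc : ∀ c, IsClosedWalk src tgt c → 0 ≤ (c.map g).sum) {s : V}
    (hreach : ∀ v, Reaches src tgt s v)
    {C : List E} (hC : IsClosedWalk src tgt C) (hC₀ : (C.map g).sum = 0) :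
    ∃ v Q, IsWalkFrom src tgt s v Q ∧ Q.length = Fintype.card V ∧
      ∀ l, IsWalkFrom src tgt s v l → (Q.map g).sum ≤ (l.map g).sum := by
  choose P hP hPlen hPmin using fun v => (hreach v).exists_minimal_walk hcyc
  set u₀ := src (C.head hC.1)
  set m := Fintype.card V - (P u₀).length with hm
  set W := (List.replicate m C).flatten
  have hWg : (W.map g).sum = 0 := by simp [W, List.map_flatten, List.sum_flatten, hC₀]
  have hWlen : m ≤ W.length := by
    simpa [W] using Nat.le_mul_of_pos_right m (List.length_pos_iff.2 hC.1)
  have hW : IsWalkFrom src tgt u₀ u₀ (W.take m ++ W.drop m) := by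
    rw [W.take_append_drop]; exact hC.isWalkFrom.flatten_replicate m
  obtain ⟨hT, hR⟩ := hW.of_append
  set u₁ := walkEnd tgt u₀ (W.take m)
  refine ⟨u₁, P u₀ ++ W.take m, (hP u₀).append hT, ?_,
    fun l hl => le_trans ?_ (hPmin u₁ l hl)⟩
  · have := hPlen u₀
    simp only [List.length_append, List.length_take]
    omega
  -- closing the winding with the rest of `W` gives a walk to `u₀`, so `P u₀` is no heavier
  have hu₀ := hPmin u₀ _ ((hP u₁).append hR)
  rw [← W.take_append_drop m] at hWg
  simp only [List.map_append, List.sum_append] at hu₀ hWg ⊢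
  linarith

end MinimalWalks

section KarpRatio

noncomputable def karpRatio (src tgt : E → V) (f : E → ℝ) (s : V) (n k : ℕ) (v : V) :
    EReal :=
  (minWalkWeight src tgt f s n v - minWalkWeight src tgt f s k v) / ((n - k : ℕ) : EReal)

variable {f : E → ℝ} {s v : V} {n k : ℕ} {r : ℝ}

theorem le_karpRatio (hk : k < n) {A B : List E}
    (hA : minWalkWeight src tgt f s n v = (A.map f).sum) (hB : IsWalkFrom src tgt s v B)
    (hBk : B.length = k) (h : (n - k : ℕ) * r ≤ (A.map f).sum - (B.map f).sum) :
    (r : EReal) ≤ karpRatio src tgt f s n k v := by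
  have hnk : (0 : ℝ) < (n - k : ℕ) := by exact_mod_cast Nat.sub_pos_of_lt hk
  calc (r : EReal) ≤ (((A.map f).sum - (B.map f).sum) / (n - k : ℕ) : ℝ) := by
        rw [EReal.coe_le_coe_iff, le_div_iff₀ hnk]; linarith
    _ = ((A.map f).sum - ((B.map f).sum : EReal)) / ((n - k : ℕ) : EReal) := by
        norm_cast
    _ ≤ karpRatio src tgt f s n k v := by
        rw [karpRatio, hA]
        exact EReal.div_le_div_right_of_nonneg (by positivity)
          (EReal.sub_le_sub le_rfl (minWalkWeight_le hB hBk))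

theorem karpRatio_le [Finite E] (hk : k < n) {a : ℝ} (ha : minWalkWeight src tgt f s n v ≤ a)
    (h : ∀ B, IsWalkFrom src tgt s v B → B.length = k →
      a - (B.map f).sum ≤ (n - k : ℕ) * r) :
    karpRatio src tgt f s n k v ≤ r := by
  have hnk : (0 : ℝ) < (n - k : ℕ) := by exact_mod_cast Nat.sub_pos_of_lt hk
  by_cases hFk : minWalkWeight src tgt f s k v = ⊤
  · rw [karpRatio, hFk, EReal.sub_top,
      EReal.bot_div_of_pos_ne_top (by exact_mod_cast hnk) (EReal.natCast_ne_top _)]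
    exact bot_le
  obtain ⟨B, hB, hBk, hFB⟩ := exists_minWalkWeight_eq hFk
  calc karpRatio src tgt f s n k v ≤ ((a : EReal) - (B.map f).sum) / ((n - k : ℕ) : EReal) := by
        rw [karpRatio, hFB]
        exact EReal.div_le_div_right_of_nonneg (by positivity) (EReal.sub_le_sub ha le_rfl)
    _ = ((a - (B.map f).sum) / (n - k : ℕ) : ℝ) := by norm_cast
    _ ≤ r := by rw [EReal.coe_le_coe_iff, div_le_iff₀ hnk]; linarith [h B hB hBk]

variable [Fintype V]

theorem iSup_karpRatio_eq_top (hsv : Reaches src tgt s v)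
    (hFn : minWalkWeight src tgt f s (Fintype.card V) v = ⊤) :
    ⨆ k ∈ Finset.range (Fintype.card V), karpRatio src tgt f s (Fintype.card V) k v = ⊤ := by
  obtain ⟨l, hl, hlen⟩ := hsv.exists_short_walk
  have hnk : (0 : EReal) < (Fintype.card V - l.length : ℕ) := by
    exact_mod_cast Nat.sub_pos_of_lt hlen
  refine eq_top_iff.2 (le_iSup₂_of_le l.length (Finset.mem_range.2 hlen) ?_)
  rw [karpRatio, hFn, EReal.top_sub (minWalkWeight_ne_top hl rfl),
    EReal.top_div_of_pos_ne_top hnk (EReal.natCast_ne_top _)]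

theorem minWalkWeight_card_eq_top (h : ¬ ∃ c : List E, IsClosedWalk src tgt c) :
    minWalkWeight src tgt f s (Fintype.card V) v = ⊤ :=
  minWalkWeight_eq_top fun l hl hlen => by
    obtain ⟨_, l₂, _, _, -, hne, -, -, h₂, -⟩ := hl.exists_cycle_split hlen.ge
    exact h ⟨l₂, h₂.isClosedWalk hne⟩

variable [Finite E]

theorem le_iSup_karpRatio (hsv : Reaches src tgt s v)
    (hcyc : ∀ c, IsClosedWalk src tgt c → c.length * r ≤ (c.map f).sum) :
    (r : EReal) ≤
      ⨆ k ∈ Finset.range (Fintype.card V), karpRatio src tgt f s (Fintype.card V) k v := by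
  by_cases hFn : minWalkWeight src tgt f s (Fintype.card V) v = ⊤
  · rw [iSup_karpRatio_eq_top hsv hFn]
    exact le_top
  obtain ⟨A, hA, hAlen, hFA⟩ := exists_minWalkWeight_eq hFn
  obtain ⟨l₁, l₂, l₃, x, rfl, hne, -, h₁, h₂, h₃⟩ := hA.exists_cycle_split hAlen.ge
  have hpos := List.length_pos_iff.2 hne
  have hlen : Fintype.card V - (l₁ ++ l₃).length = l₂.length := by
    simp only [List.length_append] at hAlen ⊢; omega
  refine le_iSup₂_of_le _ (Finset.mem_range.2 (by omega))
    (le_karpRatio (by omega) hFA (h₁.append h₃) rfl ?_)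
  have hcycle := hcyc l₂ (h₂.isClosedWalk hne)
  rw [hlen]
  simp only [List.map_append, List.sum_append]
  linarith

theorem exists_iSup_karpRatio_le (hreach : ∀ v, Reaches src tgt s v) {C : List E}
    (hC : IsClosedWalk src tgt C) (hCr : (C.map f).sum = C.length * r)
    (hcyc : ∀ c, IsClosedWalk src tgt c → c.length * r ≤ (c.map f).sum) :
    ∃ v, ⨆ k ∈ Finset.range (Fintype.card V),
      karpRatio src tgt f s (Fintype.card V) k v ≤ r := by
  have hg (l : List E) := sum_map_sub_const f r l
  obtain ⟨v, Q, hQ, hQlen, hQmin⟩ := exists_minimal_walk_length_eq_card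
    (fun c hc => by rw [hg]; linarith [hcyc c hc]) hreach hC (by rw [hg, hCr, sub_self])
  refine ⟨v, iSup₂_le fun k hk => ?_⟩
  have hk := Finset.mem_range.1 hk
  refine karpRatio_le hk (minWalkWeight_le hQ hQlen) fun B hB hBk => ?_
  have hQB := hQmin B hB
  rw [hg, hg, hQlen, hBk] at hQB
  push_cast [hk.le]
  linarith

end KarpRatio

end

theorem karp_min_cycle_mean_general {V E : Type*} [Fintype V] [Fintype E]
    (src tgt : E → V) (f : E → ℝ) (s : V)
    (hconn : StronglyConnected src tgt) :
    minCycleMean src tgt f =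
      ⨅ v : V, ⨆ k ∈ Finset.range (Fintype.card V),
        (minWalkWeight src tgt f s (Fintype.card V) v -
            minWalkWeight src tgt f s k v) /
          ((Fintype.card V - k : ℕ) : EReal) := by
  change _ = ⨅ v, ⨆ k ∈ _, karpRatio src tgt f s (Fintype.card V) k v
  by_cases hc : ∃ c : List E, IsClosedWalk src tgt c
  · obtain ⟨r, C, hC, hCr, hcyc, hr⟩ := exists_minCycleMean_eq f hc
    obtain ⟨v, hv⟩ := exists_iSup_karpRatio_le (hconn s) hC hCr hcyc
    rw [hr]
    exact le_antisymm (le_iInf fun v => le_iSup_karpRatio (hconn s v) hcyc) (iInf_le_of_le v hv)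
  · rw [minCycleMean_eq_top f hc]
    exact (iInf_eq_top.2 fun v =>
      iSup_karpRatio_eq_top (hconn s v) (minWalkWeight_card_eq_top hc)).symm

/-- Karp'\''s theorem: in a finite strongly connected edge-weighted digraph with
n vertices and source s, the minimum cycle mean equals
min over v of max over 0 ≤ k ≤ n-1 of (F_n(v) - F_k(v)) / (n - k). -/
theorem karp_min_cycle_mean {V E : Type*} [Fintype V] [Fintype E] [Nonempty V]
    (src tgt : E → V) (f : E → ℝ) (s : V)
    (hconn : StronglyConnected src tgt) :
    minCycleMean src tgt f =
      ⨅ v : V, ⨆ k ∈ Finset.range (Fintype.card V),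
        (minWalkWeight src tgt f s (Fintype.card V) v -
            minWalkWeight src tgt f s k v) /
          ((Fintype.card V - k : ℕ) : EReal) :=
  karp_min_cycle_mean_general src tgt f s hconn
end

section
/- Let A be an identifying code in the strip S_k, let n ≥ 4, and let j ∈ ℤ. Define P = (A ∩ ({jn, …, (j+1)n − 1} × ℤ_k)) ∪ ({jn, jn+1, jn+2, jn+3} × ℤ_k), and let C be the periodic set with period n whose restriction to columns jn through (j+1)n − 1 is P. Then C is an identifying code in S_k. -/
open Filter

/-- The strip S_k: vertex set the integers times {0,...,k-1}, with edges
between vertices at Euclidean distance 1. -/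
def strip (k : ℕ) : SimpleGraph (ℤ × Fin k) where
  Adj p q := (p.1 - q.1).natAbs + ((p.2 : ℤ) - (q.2 : ℤ)).natAbs = 1
  symm := by constructor; intro p q h; (try dsimp only at h ⊢); omega
  loopless := by constructor; intro p h; (try dsimp only at h ⊢); omega

/-- The ball of radius r around the vertex (0,0), in graph distance. -/
def stripBall (k : ℕ) (hk : 0 < k) (r : ℕ) : Set (ℤ × Fin k) :=
  {p | (strip k).dist (0, ⟨0, hk⟩) p ≤ r}

/-- The density of C within the ball of radius r. -/
noncomputable def densSeq (k : ℕ) (hk : 0 < k) (C : Set (ℤ × Fin k)) (r : ℕ) :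
    ℝ :=
  ((C ∩ stripBall k hk r).ncard : ℝ) / ((stripBall k hk r).ncard : ℝ)

/-- The upper density of C in the strip S_k. -/
noncomputable def upperDensity (k : ℕ) (hk : 0 < k) (C : Set (ℤ × Fin k)) :
    ℝ :=
  limsup (densSeq k hk C) atTop

/-- The infimum density of an identifying code in S_k. -/
noncomputable def dstar (k : ℕ) (hk : 0 < k) : ℝ :=
  sInf {d : ℝ | ∃ C : Set (ℤ × Fin k),
    IsIdentifyingCode (strip k) C ∧ d = upperDensity k hk C}

/-- C is periodic with pattern length l. -/
def PeriodicWith (k : ℕ) (l : ℕ) (C : Set (ℤ × Fin k)) : Prop :=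
  ∀ p : ℤ × Fin k, p ∈ C ↔ ((p.1 + (l : ℤ), p.2) ∈ C)

/-!
Whether `C` dominates `v` depends only on `C ∩ N[v]`, and whether it separates `u` and `v` only on
`C ∩ (N[u] ∪ N[v])`; these lie within five consecutive columns unless `u` and `v` are three
columns apart, in which case their neighbourhoods are disjoint and domination already separates
them. Column translations are automorphisms of the strip, and those by multiples of `n` preserve
the periodic set `C`, so every such window can be moved into the columns `jn, …, jn + n + 3`.
There `C` contains every vertex of `A` (the last four columns are translates of the four full
columns), so domination and separation by `A` carry over to `C`.
-/

lemma SimpleGraph.Embedding.preimage_closedNbhd {V V' : Type*} {G : SimpleGraph V}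
    {G' : SimpleGraph V'} (φ : G ↪g G') (v : V) :
    φ ⁻¹' closedNbhd G' (φ v) = closedNbhd G v := by
  ext w
  simp [closedNbhd]

lemma inter_eq_inter_of_inter_union_subset {α : Type*} {X Y A C : Set α}
    (hAC : A ∩ (X ∪ Y) ⊆ C) (h : X ∩ C = Y ∩ C) : X ∩ A = Y ∩ A := by
  have key : ∀ Z ⊆ X ∪ Y, Z ∩ C ∩ A = Z ∩ A := fun Z hZ => by
    rw [Set.inter_right_comm, Set.inter_eq_left]
    exact fun w hw => hAC ⟨hw.2, hZ hw.1⟩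
  rw [← key X Set.subset_union_left, ← key Y Set.subset_union_right, h]

lemma closedNbhd_inter_ne_of_disjoint {V : Type*} {G : SimpleGraph V} {C : Set V}
    {u v : V} (hu : (closedNbhd G u ∩ C).Nonempty)
    (huv : Disjoint (closedNbhd G u) (closedNbhd G v)) :
    closedNbhd G u ∩ C ≠ closedNbhd G v ∩ C := by
  intro h
  obtain ⟨w, hwu, hwC⟩ := hu
  have hwv : w ∈ closedNbhd G v ∩ C := h ▸ ⟨hwu, hwC⟩
  exact Set.disjoint_left.mp huv hwu hwv.1

def stripShift (k : ℕ) (t : ℤ) : strip k ≃g strip k where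
  toEquiv := (Equiv.addRight t).prodCongr (Equiv.refl _)
  map_rel_iff' := by
    intro p q
    simp [strip]

section Strip

variable {k : ℕ}

@[simp]
lemma stripShift_apply (t : ℤ) (p : ℤ × Fin k) : stripShift k t p = (p.1 + t, p.2) :=
  rfl

lemma closedNbhd_strip_subset {v : ℤ × Fin k} {a b : ℤ} (ha : a + 1 ≤ v.1)
    (hb : v.1 + 1 ≤ b) : closedNbhd (strip k) v ⊆ Prod.fst ⁻¹' Set.Icc a b := by
  rintro w (rfl | hw)
  · exact ⟨by omega, by omega⟩
  · simp only [strip] at hw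
    exact ⟨by omega, by omega⟩

lemma disjoint_closedNbhd_strip {u v : ℤ × Fin k} (huv : u.1 + 3 ≤ v.1) :
    Disjoint (closedNbhd (strip k) u) (closedNbhd (strip k) v) :=
  Set.disjoint_left.mpr fun _ hu hv => by
    have hu' := closedNbhd_strip_subset (a := u.1 - 1) (b := u.1 + 1) (by omega) (by omega) hu
    have hv' := closedNbhd_strip_subset (a := v.1 - 1) (b := v.1 + 1) (by omega) (by omega) hv
    simp only [Set.mem_preimage, Set.mem_Icc] at hu' hv'
    omega

lemma PeriodicWith.preimage_stripShift {n : ℕ} {C : Set (ℤ × Fin k)}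
    (hC : PeriodicWith k n C) (m : ℤ) : stripShift k (m * n) ⁻¹' C = C := by
  ext p
  simp only [Set.mem_preimage, stripShift_apply]
  induction m using Int.induction_on generalizing p with
  | zero => simp
  | succ i ih =>
    rw [← ih p, hC (p.1 + i * n, p.2)]
    ring_nf
  | pred i ih =>
    rw [← ih p, hC (p.1 + (-i - 1) * n, p.2)]
    ring_nf

lemma exists_stripShift_mem_Ioc {n : ℕ} (hn : 0 < n) (a : ℤ) (v : ℤ × Fin k) :
    ∃ m : ℤ, stripShift k (m * n) v ∈ Prod.fst ⁻¹' Set.Ioc a (a + n) := by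
  obtain ⟨m, hm, -⟩ := existsUnique_add_zsmul_mem_Ioc (Int.natCast_pos.mpr hn) v.1 a
  exact ⟨m, by simpa only [smul_eq_mul, Set.mem_preimage, stripShift_apply] using hm⟩

theorem isIdentifyingCode_strip_of_periodicWith {n : ℕ} (hn : 0 < n) {a : ℤ}
    {A C : Set (ℤ × Fin k)} (hC : PeriodicWith k n C) (hA : IsIdentifyingCode (strip k) A)
    (hAC : A ∩ Prod.fst ⁻¹' Set.Icc a (a + n + 3) ⊆ C) :
    IsIdentifyingCode (strip k) C := by
  have hshift : ∀ m : ℤ, ∀ v, closedNbhd (strip k) v ∩ C =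
      stripShift k (m * n) ⁻¹' (closedNbhd (strip k) (stripShift k (m * n) v) ∩ C) := by
    intro m v
    rw [Set.preimage_inter, hC.preimage_stripShift]
    exact congrArg (· ∩ C) ((stripShift k (m * n)).toEmbedding.preimage_closedNbhd v).symm
  have hdom : ∀ v, (closedNbhd (strip k) v ∩ C).Nonempty := by
    intro v
    obtain ⟨m, hm₁, hm₂⟩ := exists_stripShift_mem_Ioc hn a v
    set φ := stripShift k (m * n)
    have hsub : closedNbhd (strip k) (φ v) ⊆ Prod.fst ⁻¹' Set.Icc a (a + n + 3) :=
      closedNbhd_strip_subset (by omega) (by omega)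
    have hφv : (closedNbhd (strip k) (φ v) ∩ C).Nonempty :=
      (hA.1 (φ v)).mono fun w hw => ⟨hw.1, hAC ⟨hw.2, hsub hw.1⟩⟩
    rw [hshift m v]
    exact hφv.preimage φ.surjective
  refine ⟨hdom, fun u v huv => ?_⟩
  wlog hle : u.1 ≤ v.1 generalizing u v
  · exact (this v u huv.symm (by omega)).symm
  by_cases hfar : u.1 + 3 ≤ v.1
  · exact closedNbhd_inter_ne_of_disjoint (hdom u) (disjoint_closedNbhd_strip hfar)
  obtain ⟨m, hm₁, hm₂⟩ := exists_stripShift_mem_Ioc hn a u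
  set φ := stripShift k (m * n)
  have hφu : (φ u).1 = u.1 + m * n := rfl
  have hφv : (φ v).1 = v.1 + m * n := rfl
  have hsub : A ∩ (closedNbhd (strip k) (φ u) ∪ closedNbhd (strip k) (φ v)) ⊆ C := by
    refine (Set.inter_subset_inter_right A (Set.union_subset ?_ ?_)).trans hAC
    · exact closedNbhd_strip_subset (by omega) (by omega)
    · exact closedNbhd_strip_subset (by omega) (by omega)
  have hφ : closedNbhd (strip k) (φ u) ∩ C ≠ closedNbhd (strip k) (φ v) ∩ C := fun h =>
    hA.2 _ _ (φ.injective.ne huv) (inter_eq_inter_of_inter_union_subset hsub h)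
  rw [hshift m u, hshift m v]
  exact (Set.preimage_injective.mpr φ.surjective).ne hφ

def periodize (n : ℕ) (P : Set (ℤ × Fin k)) : Set (ℤ × Fin k) :=
  {p | ∃ m : ℤ, (p.1 + m * n, p.2) ∈ P}

lemma periodicWith_periodize (n : ℕ) (P : Set (ℤ × Fin k)) :
    PeriodicWith k n (periodize n P) := by
  intro p
  constructor
  · rintro ⟨m, hm⟩
    refine ⟨m - 1, ?_⟩
    rwa [show p.1 + n + (m - 1) * n = p.1 + m * n by ring]
  · rintro ⟨m, hm⟩
    refine ⟨m + 1, ?_⟩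
    rwa [show p.1 + (m + 1) * n = p.1 + n + m * n by ring]

end Strip

/-- Taking the part of an identifying code A in an n-bar, adding the first 4
full columns of the bar, and repeating this pattern periodically yields an
identifying code in the strip. -/
theorem periodic_repetition_is_identifying (k : ℕ) (n : ℕ) (hn : 4 ≤ n)
    (j : ℤ) (A : Set (ℤ × Fin k)) (hA : IsIdentifyingCode (strip k) A) :
    IsIdentifyingCode (strip k)
      {p : ℤ × Fin k | ∃ m : ℤ,
        (p.1 + m * (n : ℤ), p.2) ∈
          (A ∩ {q : ℤ × Fin k |
              j * (n : ℤ) ≤ q.1 ∧ q.1 < (j + 1) * (n : ℤ)}) ∪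
            {q : ℤ × Fin k |
              j * (n : ℤ) ≤ q.1 ∧ q.1 ≤ j * (n : ℤ) + 3}} := by
  refine isIdentifyingCode_strip_of_periodicWith (a := j * n) (by omega)
    (periodicWith_periodize n _) hA ?_
  -- columns `jn + n, …, jn + n + 3` are the translates of the four full columns
  rintro p ⟨hpA, hlo, hhi⟩
  rcases lt_or_ge p.1 ((j + 1) * n) with hp | hp
  · exact ⟨0, Or.inl ⟨by simpa using hpA, by simpa using hlo, by simpa using hp⟩⟩
  · exact ⟨-1, Or.inr ⟨by simp only; linarith, by simp only; linarith⟩⟩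
end
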